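/- arXiv:1302.6950 — 2 statements merged into one kernel-verified Lean document; each statement's English description precedes it below -/
import Mathlib

section
/- For square matrices T₁,...,T_l and positive integer N, ∑_{lcm(s₁,...,s_l)=N} S(s₁,T₁)···S(s_l,T_l) = S(N, T₁ ⊗ ··· ⊗ T_l), with S(m,T) := ∑_{g | m} μ(g) Tr(T^{m/g}) and the sum over all l-tuples of positive integers with least common multiple N. -/
open scoped ArithmeticFunction ArithmeticFunction.Moebius

/-- `S(m, T) = ∑_{g | m} μ(g) · Tr(T^{m/g})`. -/
def SW {α : Type*} [Fintype α] [DecidableEq α] (m : ℕ) (T : Matrix α α ℤ) : ℤ :=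
  ∑ g ∈ m.divisors, (μ g : ℤ) * (T ^ (m / g)).trace

/-- The Kronecker (tensor) product of a family of square matrices,
realized as a matrix indexed by tuples. -/
def kronFamily {l : ℕ} {n : ℕ} (T : Fin l → Matrix (Fin n) (Fin n) ℤ) :
    Matrix (Fin l → Fin n) (Fin l → Fin n) ℤ :=
  Matrix.of fun x y => ∏ i, T i (x i) (y i)

lemma kron_mul {l n : ℕ} (T U : Fin l → Matrix (Fin n) (Fin n) ℤ) :
    kronFamily T * kronFamily U = kronFamily (fun i => T i * U i) := by
  ext x y
  simp only [kronFamily, Matrix.mul_apply, Matrix.of_apply]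
  rw [Finset.prod_univ_sum, Fintype.piFinset_univ]
  exact Finset.sum_congr rfl fun z _ => (Finset.prod_mul_distrib).symm

lemma kron_one {l n : ℕ} :
    kronFamily (fun _ : Fin l => (1 : Matrix (Fin n) (Fin n) ℤ)) = 1 := by
  ext x y
  simp only [kronFamily, Matrix.of_apply, Matrix.one_apply]
  by_cases h : x = y
  · subst h; simp
  · rw [if_neg h]
    obtain ⟨i, hi⟩ := Function.ne_iff.mp h
    exact Finset.prod_eq_zero (Finset.mem_univ i) (by simp [hi])

lemma kron_pow {l n : ℕ} (T : Fin l → Matrix (Fin n) (Fin n) ℤ) (m : ℕ) :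
    (kronFamily T) ^ m = kronFamily (fun i => T i ^ m) := by
  induction m with
  | zero => simp [kron_one]
  | succ m ih => simp only [pow_succ, ih, kron_mul]

lemma trace_kron {l n : ℕ} (U : Fin l → Matrix (Fin n) (Fin n) ℤ) :
    (kronFamily U).trace = ∏ i, (U i).trace := by
  simp only [Matrix.trace, Matrix.diag, kronFamily, Matrix.of_apply]
  rw [Finset.prod_univ_sum, Fintype.piFinset_univ]

lemma sum_SW {α : Type*} [Fintype α] [DecidableEq α] (T : Matrix α α ℤ) :
    ∀ m > 0, ∑ d ∈ Nat.divisors m, SW d T = (T ^ m).trace := by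
  rw [ArithmeticFunction.sum_eq_iff_sum_mul_moebius_eq]
  intro m hm
  simp only [Int.cast_id]
  rw [Nat.sum_divisorsAntidiagonal (fun a b => (μ a : ℤ) * (T ^ b).trace)]
  rfl

theorem stmt4 {l n : ℕ} (hl : 0 < l) (T : Fin l → Matrix (Fin n) (Fin n) ℤ)
    (N : ℕ) (hN : 0 < N) :
    ∑ s ∈ (Fintype.piFinset fun _ : Fin l => N.divisors).filter
        (fun s => Finset.univ.lcm s = N),
      ∏ i, SW (s i) (T i) = SW N (kronFamily T) := by
  set G : ℕ → ℤ := fun d =>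
    ∑ s ∈ (Fintype.piFinset fun _ : Fin l => d.divisors).filter
        (fun s => Finset.univ.lcm s = d),
      ∏ i, SW (s i) (T i) with hG
  have key : ∀ m > 0, ∑ d ∈ Nat.divisors m, G d = ((kronFamily T) ^ m).trace := by
    intro m hm
    rw [kron_pow, trace_kron]
    have : ∀ i : Fin l, (T i ^ m).trace = ∑ d ∈ Nat.divisors m, SW d (T i) :=
      fun i => (sum_SW (T i) m hm).symm
    simp only [this]
    rw [Finset.prod_univ_sum]
    rw [← Finset.sum_fiberwise_of_maps_to (g := fun s => Finset.univ.lcm s)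
      (t := Nat.divisors m) ?_]
    · apply Finset.sum_congr rfl
      intro d hd
      have hdm : d ∣ m := Nat.dvd_of_mem_divisors hd
      have hd0 : 0 < d := Nat.pos_of_mem_divisors hd
      apply Finset.sum_congr ?_ (fun _ _ => rfl)
      ext s
      simp only [Finset.mem_filter, Fintype.mem_piFinset, Nat.mem_divisors]
      constructor
      · rintro ⟨hs, rfl⟩
        exact ⟨fun i => ⟨(hs i).1.trans hdm, hm.ne'⟩, rfl⟩
      · rintro ⟨hs, rfl⟩
        exact ⟨fun i => ⟨Finset.dvd_lcm (Finset.mem_univ i), hd0.ne'⟩, rfl⟩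
    · intro s hs
      simp only [Fintype.mem_piFinset, Nat.mem_divisors] at hs
      exact Nat.mem_divisors.mpr ⟨Finset.lcm_dvd (fun i _ => (hs i).1), hm.ne'⟩
  have inv := ArithmeticFunction.sum_eq_iff_sum_mul_moebius_eq.mp key N hN
  have hGN : G N = ∑ s ∈ (Fintype.piFinset fun _ : Fin l => N.divisors).filter
        (fun s => Finset.univ.lcm s = N), ∏ i, SW (s i) (T i) := rfl
  rw [← hGN, ← inv, SW,
    ← Nat.sum_divisorsAntidiagonal (fun a b => (μ a : ℤ) * ((kronFamily T ^ b)).trace)]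
  simp [Int.cast_id]
end

section
/- For square matrices T₁, T₂ and a positive integer N, ∑_{lcm(s,t)=N} gcd(s,t)·Ω(s,T₁)·Ω(t,T₂) = Ω(N, T₁ ⊗ T₂), where Ω(m,T) := (1/m)∑_{g|m} μ(g) Tr(T^{m/g}). -/
open scoped ArithmeticFunction Kronecker

/-- `Ω(m, T) = (1/m) ∑_{g | m} μ(g) · Tr(T^{m/g})` as a rational number. -/
noncomputable def OmegaW {α : Type*} [Fintype α] [DecidableEq α] (m : ℕ)
    (T : Matrix α α ℤ) : ℚ :=
  (1 / (m : ℚ)) * ∑ g ∈ m.divisors, (ArithmeticFunction.moebius g : ℚ) * ((T ^ (m / g)).trace : ℚ)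

lemma mulOmega_eq {α : Type*} [Fintype α] [DecidableEq α] (T : Matrix α α ℤ) (n : ℕ)
    (hn : 0 < n) :
    (n : ℚ) * OmegaW n T = ∑ g ∈ n.divisors, (ArithmeticFunction.moebius g : ℚ) * ((T ^ (n / g)).trace : ℚ) := by
  unfold OmegaW
  rw [← mul_assoc, mul_one_div, div_self (by exact_mod_cast hn.ne'), one_mul]

lemma omega_inv {α : Type*} [Fintype α] [DecidableEq α] (T : Matrix α α ℤ) :
    ∀ n > 0, ∑ d ∈ n.divisors, ((d : ℕ) : ℚ) * OmegaW d T = ((T ^ n).trace : ℚ) := by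
  rw [ArithmeticFunction.sum_eq_iff_sum_mul_moebius_eq]
  intro n hn
  rw [Nat.sum_divisorsAntidiagonal (f := fun g d => (ArithmeticFunction.moebius g : ℚ) * ((T ^ d).trace : ℚ)),
    mulOmega_eq T n hn]

lemma kron_pow_s5 {n₁ n₂ : ℕ} (T₁ : Matrix (Fin n₁) (Fin n₁) ℤ)
    (T₂ : Matrix (Fin n₂) (Fin n₂) ℤ) (n : ℕ) :
    (T₁ ⊗ₖ T₂) ^ n = (T₁ ^ n) ⊗ₖ (T₂ ^ n) := by
  induction n with
  | zero => simp [Matrix.one_kronecker_one]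
  | succ k ih => rw [pow_succ, pow_succ, pow_succ, ih, Matrix.mul_kronecker_mul]

lemma trace_kron_pow {n₁ n₂ : ℕ} (T₁ : Matrix (Fin n₁) (Fin n₁) ℤ)
    (T₂ : Matrix (Fin n₂) (Fin n₂) ℤ) (n : ℕ) :
    (((T₁ ⊗ₖ T₂) ^ n).trace : ℚ) = ((T₁ ^ n).trace : ℚ) * ((T₂ ^ n).trace : ℚ) := by
  rw [kron_pow_s5, Matrix.trace_kronecker]; push_cast; ring

theorem stmt5 {n₁ n₂ : ℕ} (T₁ : Matrix (Fin n₁) (Fin n₁) ℤ)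
    (T₂ : Matrix (Fin n₂) (Fin n₂) ℤ) (N : ℕ) (hN : 0 < N) :
    ∑ p ∈ (N.divisors ×ˢ N.divisors).filter (fun p => Nat.lcm p.1 p.2 = N),
        (Nat.gcd p.1 p.2 : ℚ) * OmegaW p.1 T₁ * OmegaW p.2 T₂
      = OmegaW N (T₁ ⊗ₖ T₂) := by
  set F : ℕ → ℚ := fun m =>
    ∑ p ∈ (m.divisors ×ˢ m.divisors).filter (fun p => Nat.lcm p.1 p.2 = m),
      (((p.1 : ℕ) : ℚ) * OmegaW p.1 T₁) * (((p.2 : ℕ) : ℚ) * OmegaW p.2 T₂) with hF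
  set G : ℕ → ℚ := fun m => ((m : ℕ) : ℚ) * OmegaW m (T₁ ⊗ₖ T₂) with hG
  have hfib : ∀ n, 0 < n → ∀ d ∈ n.divisors,
      (d.divisors ×ˢ d.divisors).filter (fun p => Nat.lcm p.1 p.2 = d)
        = (n.divisors ×ˢ n.divisors).filter (fun p : ℕ × ℕ => Nat.lcm p.1 p.2 = d) := by
    intro n hn d hd
    have hd0 : d ≠ 0 := (Nat.pos_of_mem_divisors hd).ne'
    have hdvd : d ∣ n := (Nat.mem_divisors.mp hd).1
    ext p
    simp only [Finset.mem_filter, Finset.mem_product, Nat.mem_divisors]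
    constructor
    · rintro ⟨⟨⟨h1, -⟩, ⟨h2, -⟩⟩, hl⟩
      exact ⟨⟨⟨h1.trans hdvd, hn.ne'⟩, ⟨h2.trans hdvd, hn.ne'⟩⟩, hl⟩
    · rintro ⟨-, hl⟩
      exact ⟨⟨⟨hl ▸ Nat.dvd_lcm_left _ _, hd0⟩, ⟨hl ▸ Nat.dvd_lcm_right _ _, hd0⟩⟩, hl⟩
  have hFsum : ∀ n > 0, ∑ d ∈ n.divisors, F d = (((T₁ ⊗ₖ T₂) ^ n).trace : ℚ) := by
    intro n hn
    have step1 : ∑ d ∈ n.divisors, F d = ∑ d ∈ n.divisors,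
        ∑ p ∈ (n.divisors ×ˢ n.divisors).filter (fun p : ℕ × ℕ => Nat.lcm p.1 p.2 = d),
          (((p.1 : ℕ) : ℚ) * OmegaW p.1 T₁) * (((p.2 : ℕ) : ℚ) * OmegaW p.2 T₂) := by
      refine Finset.sum_congr rfl fun d hd => ?_
      simp only [hF]
      exact Finset.sum_congr (hfib n hn d hd) fun _ _ => rfl
    rw [step1, Finset.sum_fiberwise_of_maps_to (fun p hp => ?_), trace_kron_pow,
      ← omega_inv T₁ n hn, ← omega_inv T₂ n hn, Finset.sum_mul_sum, ← Finset.sum_product']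
    · simp only [Finset.mem_product, Nat.mem_divisors] at hp ⊢
      exact ⟨Nat.lcm_dvd hp.1.1 hp.2.1, hn.ne'⟩
  have hGsum : ∀ n > 0, ∑ d ∈ n.divisors, G d = (((T₁ ⊗ₖ T₂) ^ n).trace : ℚ) :=
    omega_inv (T₁ ⊗ₖ T₂)
  have hFG : F N = G N := by
    have h1 := (ArithmeticFunction.sum_eq_iff_sum_mul_moebius_eq
      (f := F) (g := fun n => (((T₁ ⊗ₖ T₂) ^ n).trace : ℚ))).mp hFsum N hN
    have h2 := (ArithmeticFunction.sum_eq_iff_sum_mul_moebius_eq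
      (f := G) (g := fun n => (((T₁ ⊗ₖ T₂) ^ n).trace : ℚ))).mp hGsum N hN
    rw [← h1, ← h2]
  have hNQ : (N : ℚ) ≠ 0 := by exact_mod_cast hN.ne'
  have key : (N : ℚ) * (∑ p ∈ (N.divisors ×ˢ N.divisors).filter
        (fun p => Nat.lcm p.1 p.2 = N),
        (Nat.gcd p.1 p.2 : ℚ) * OmegaW p.1 T₁ * OmegaW p.2 T₂)
      = (N : ℚ) * OmegaW N (T₁ ⊗ₖ T₂) := by
    rw [show (N : ℚ) * OmegaW N (T₁ ⊗ₖ T₂) = G N from rfl, ← hFG, hF, Finset.mul_sum]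
    refine Finset.sum_congr rfl fun p hp => ?_
    have hl : Nat.lcm p.1 p.2 = N := (Finset.mem_filter.mp hp).2
    have h12 : ((p.1 : ℕ) : ℚ) * ((p.2 : ℕ) : ℚ) = (Nat.gcd p.1 p.2 : ℚ) * (N : ℚ) := by
      have := Nat.gcd_mul_lcm p.1 p.2
      rw [hl] at this
      exact_mod_cast this.symm
    calc (N : ℚ) * ((Nat.gcd p.1 p.2 : ℚ) * OmegaW p.1 T₁ * OmegaW p.2 T₂)
        = (Nat.gcd p.1 p.2 : ℚ) * (N : ℚ) * (OmegaW p.1 T₁ * OmegaW p.2 T₂) := by ring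
      _ = ((p.1 : ℕ) : ℚ) * ((p.2 : ℕ) : ℚ) * (OmegaW p.1 T₁ * OmegaW p.2 T₂) := by rw [h12]
      _ = ((p.1 : ℕ) : ℚ) * OmegaW p.1 T₁ * (((p.2 : ℕ) : ℚ) * OmegaW p.2 T₂) := by ring
  exact mul_left_cancel₀ hNQ key
end
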